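/- There is no quadratic polynomial h(s₁,s₂,y) in Ising variables such that h(s₁,s₂,y) = 0 for all (s₁,s₂,y) ∈ {−1,1}³ with y = s₁s₂, and h(s₁,s₂,y) ≥ 1 for all (s₁,s₂,y) ∈ {−1,1}³ with y ≠ s₁s₂. -/

import Mathlib

/-!
The cubic character `s₁ s₂ y` is orthogonal to every quadratic polynomial on `{-1, 1}³`, so such a
polynomial has the same sum over the four points with `y = s₁ s₂` as over the four points with
`y ≠ s₁ s₂`. Under the hypotheses the first sum is `0` and the second is at least `4`.
-/

def isingQuadratic (a₀ a₁ a₂ a₃ a₁₂ a₁₃ a₂₃ s₁ s₂ y : ℝ) : ℝ :=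
  a₀ + a₁ * s₁ + a₂ * s₂ + a₃ * y + a₁₂ * s₁ * s₂ + a₁₃ * s₁ * y + a₂₃ * s₂ * y

theorem isingQuadratic_sum_antiparity_eq_sum_parity (a₀ a₁ a₂ a₃ a₁₂ a₁₃ a₂₃ : ℝ) :
    let q := isingQuadratic a₀ a₁ a₂ a₃ a₁₂ a₁₃ a₂₃
    q 1 1 (-1) + q 1 (-1) 1 + q (-1) 1 1 + q (-1) (-1) (-1) =
      q 1 1 1 + q 1 (-1) (-1) + q (-1) 1 (-1) + q (-1) (-1) 1 := by
  simp only [isingQuadratic]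
  ring

theorem stmt_3 :
    ¬ ∃ a₀ a₁ a₂ a₃ a₁₂ a₁₃ a₂₃ : ℝ, ∀ s₁ s₂ y : ℝ,
      s₁ ∈ ({-1, 1} : Set ℝ) → s₂ ∈ ({-1, 1} : Set ℝ) → y ∈ ({-1, 1} : Set ℝ) →
      (y = s₁ * s₂ →
        a₀ + a₁ * s₁ + a₂ * s₂ + a₃ * y + a₁₂ * s₁ * s₂ + a₁₃ * s₁ * y + a₂₃ * s₂ * y = 0) ∧
      (y ≠ s₁ * s₂ →
        a₀ + a₁ * s₁ + a₂ * s₂ + a₃ * y + a₁₂ * s₁ * s₂ + a₁₃ * s₁ * y + a₂₃ * s₂ * y ≥ 1) := by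
  rintro ⟨a₀, a₁, a₂, a₃, a₁₂, a₁₃, a₂₃, h⟩
  set q := isingQuadratic a₀ a₁ a₂ a₃ a₁₂ a₁₃ a₂₃
  have m : (-1 : ℝ) ∈ ({-1, 1} : Set ℝ) := Or.inl rfl
  have p : (1 : ℝ) ∈ ({-1, 1} : Set ℝ) := Or.inr rfl
  have e₁ : q 1 1 1 = 0 := (h 1 1 1 p p p).1 (by norm_num)
  have e₂ : q 1 (-1) (-1) = 0 := (h 1 (-1) (-1) p m m).1 (by norm_num)
  have e₃ : q (-1) 1 (-1) = 0 := (h (-1) 1 (-1) m p m).1 (by norm_num)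
  have e₄ : q (-1) (-1) 1 = 0 := (h (-1) (-1) 1 m m p).1 (by norm_num)
  have g₁ : q 1 1 (-1) ≥ 1 := (h 1 1 (-1) p p m).2 (by norm_num)
  have g₂ : q 1 (-1) 1 ≥ 1 := (h 1 (-1) 1 p m p).2 (by norm_num)
  have g₃ : q (-1) 1 1 ≥ 1 := (h (-1) 1 1 m p p).2 (by norm_num)
  have g₄ : q (-1) (-1) (-1) ≥ 1 := (h (-1) (-1) (-1) m m m).2 (by norm_num)
  linarith [isingQuadratic_sum_antiparity_eq_sum_parity a₀ a₁ a₂ a₃ a₁₂ a₁₃ a₂₃]
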